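/- arXiv:1402.4172 — 7 statements merged into one kernel-verified Lean document; each statement's English description precedes it below -/
import Mathlib

section
/- Rule I (left) preserves metatruth pointwise: for any context Φ{}, inner context Ψ{}, cirquents A, B, C, cluster ID k, interpretation *, and metaselection f, the cirquent Φ{Ψ{A} ∨_k C} is metatrue w.r.t. (*, f) if and only if Φ{Ψ{A ∨_k B} ∨_k C} is metatrue w.r.t. (*, f). -/
/-- Cirquents: NNF propositional formulas; literals are (atom, sign),
    each ∨-occurrence carries a cluster ID (a natural number). -/
inductive Cirq : Type where
  | lit : ℕ → Bool → Cirq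
  | and : Cirq → Cirq → Cirq
  | or  : ℕ → Cirq → Cirq → Cirq

/-- Metatruth w.r.t. an interpretation `I` and metaselection `f`
    (`f k = true` means `left`). -/
def metatrue (I : ℕ → Bool) (f : ℕ → Bool) : Cirq → Prop
  | .lit n s => I n = s
  | .and A B => metatrue I f A ∧ metatrue I f B
  | .or k A B => (f k = true ∧ metatrue I f A) ∨ (f k = false ∧ metatrue I f B)

/-- Classical truth of the underlying formula (cluster IDs erased). -/
def ctrue (I : ℕ → Bool) : Cirq → Prop
  | .lit n s => I n = s
  | .and A B => ctrue I A ∧ ctrue I B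
  | .or _ A B => ctrue I A ∨ ctrue I B

/-- Truth of a cirquent under an interpretation. -/
def cirqTrue (I : ℕ → Bool) (C : Cirq) : Prop := ∃ f : ℕ → Bool, metatrue I f C

def valid (C : Cirq) : Prop := ∀ I : ℕ → Bool, cirqTrue I C

/-- Number of ∨-occurrences in cluster `k`. -/
def cnt (k : ℕ) : Cirq → ℕ
  | .lit _ _ => 0
  | .and A B => cnt k A + cnt k B
  | .or m A B => (if m = k then 1 else 0) + cnt k A + cnt k B

/-- Set of cluster IDs occurring in a cirquent. -/
def ids : Cirq → Set ℕ
  | .lit _ _ => ∅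
  | .and A B => ids A ∪ ids B
  | .or k A B => insert k (ids A ∪ ids B)

/-- A cirquent is classical iff every cluster is a singleton. -/
def classicalCirq (C : Cirq) : Prop := ∀ k : ℕ, cnt k C ≤ 1

/-- Renaming of cluster IDs. -/
def rename (ρ : ℕ → ℕ) : Cirq → Cirq
  | .lit n s => .lit n s
  | .and A B => .and (rename ρ A) (rename ρ B)
  | .or k A B => .or (ρ k) (rename ρ A) (rename ρ B)

/-- One-hole cirquent contexts. -/
inductive Ctx : Type where
  | hole : Ctx
  | andL : Ctx → Cirq → Ctx
  | andR : Cirq → Ctx → Ctx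
  | orL : ℕ → Ctx → Cirq → Ctx
  | orR : ℕ → Cirq → Ctx → Ctx

/-- Plugging a cirquent into the hole of a context. -/
def Ctx.plug : Ctx → Cirq → Cirq
  | .hole, X => X
  | .andL Φ C, X => .and (Φ.plug X) C
  | .andR C Φ, X => .and C (Φ.plug X)
  | .orL k Φ C, X => .or k (Φ.plug X) C
  | .orR k C Φ, X => .or k C (Φ.plug X)

/-- The inference rules of IF_p, as a one-step relation premise ↦ conclusion. -/
inductive Step : Cirq → Cirq → Prop where
  | ruleIL (Φ Ψ : Ctx) (A B C : Cirq) (k : ℕ) :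
      Step (Φ.plug (.or k (Ψ.plug A) C)) (Φ.plug (.or k (Ψ.plug (.or k A B)) C))
  | ruleIR (Φ Ψ : Ctx) (A B C : Cirq) (k : ℕ) :
      Step (Φ.plug (.or k C (Ψ.plug A))) (Φ.plug (.or k C (Ψ.plug (.or k B A))))
  | ruleIIL_and (Φ : Ctx) (A B C : Cirq) (k : ℕ) :
      Step (Φ.plug (.or k (.and A C) (.and B C))) (Φ.plug (.and (.or k A B) C))
  | ruleIIR_and (Φ : Ctx) (A B C : Cirq) (k : ℕ) :
      Step (Φ.plug (.or k (.and C A) (.and C B))) (Φ.plug (.and C (.or k A B)))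
  | ruleIIL_orN (Φ : Ctx) (A B C : Cirq) (k l : ℕ)
      (hns : 2 ≤ cnt l (Φ.plug (.or l (.or k A B) C))) :
      Step (Φ.plug (.or k (.or l A C) (.or l B C))) (Φ.plug (.or l (.or k A B) C))
  | ruleIIR_orN (Φ : Ctx) (A B C : Cirq) (k l : ℕ)
      (hns : 2 ≤ cnt l (Φ.plug (.or l C (.or k A B)))) :
      Step (Φ.plug (.or k (.or l C A) (.or l C B))) (Φ.plug (.or l C (.or k A B)))
  | ruleIIL_orS (Φ : Ctx) (A B C : Cirq) (ρ₁ ρ₂ : ℕ → ℕ) (k i j m : ℕ)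
      (hij : i ≠ j) (hik : i ≠ k) (hjk : j ≠ k) (him : i ≠ m) (hjm : j ≠ m) (hkm : k ≠ m)
      (hi : cnt i (Φ.plug (.or k (.or i A (rename ρ₁ C)) (.or j B (rename ρ₂ C)))) = 1)
      (hj : cnt j (Φ.plug (.or k (.or i A (rename ρ₁ C)) (.or j B (rename ρ₂ C)))) = 1)
      (hm : cnt m (Φ.plug (.or m (.or k A B) C)) = 1)
      (hfix : ∀ x ∈ ids C, cnt x (Φ.plug (.or m (.or k A B) C)) ≠ 1 → ρ₁ x = x ∧ ρ₂ x = x)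
      (hfresh : ∀ x ∈ ids C, cnt x (Φ.plug (.or m (.or k A B) C)) = 1 →
        cnt (ρ₁ x) (Φ.plug (.or k (.or i A (rename ρ₁ C)) (.or j B (rename ρ₂ C)))) = 1 ∧
        cnt (ρ₂ x) (Φ.plug (.or k (.or i A (rename ρ₁ C)) (.or j B (rename ρ₂ C)))) = 1 ∧
        ρ₁ x ≠ ρ₂ x)
      (hinj₁ : Set.InjOn ρ₁ (ids C)) (hinj₂ : Set.InjOn ρ₂ (ids C)) :
      Step (Φ.plug (.or k (.or i A (rename ρ₁ C)) (.or j B (rename ρ₂ C))))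
           (Φ.plug (.or m (.or k A B) C))
  | ruleIIR_orS (Φ : Ctx) (A B C : Cirq) (ρ₁ ρ₂ : ℕ → ℕ) (k i j m : ℕ)
      (hij : i ≠ j) (hik : i ≠ k) (hjk : j ≠ k) (him : i ≠ m) (hjm : j ≠ m) (hkm : k ≠ m)
      (hi : cnt i (Φ.plug (.or k (.or i (rename ρ₁ C) A) (.or j (rename ρ₂ C) B))) = 1)
      (hj : cnt j (Φ.plug (.or k (.or i (rename ρ₁ C) A) (.or j (rename ρ₂ C) B))) = 1)
      (hm : cnt m (Φ.plug (.or m C (.or k A B))) = 1)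
      (hfix : ∀ x ∈ ids C, cnt x (Φ.plug (.or m C (.or k A B))) ≠ 1 → ρ₁ x = x ∧ ρ₂ x = x)
      (hfresh : ∀ x ∈ ids C, cnt x (Φ.plug (.or m C (.or k A B))) = 1 →
        cnt (ρ₁ x) (Φ.plug (.or k (.or i (rename ρ₁ C) A) (.or j (rename ρ₂ C) B))) = 1 ∧
        cnt (ρ₂ x) (Φ.plug (.or k (.or i (rename ρ₁ C) A) (.or j (rename ρ₂ C) B))) = 1 ∧
        ρ₁ x ≠ ρ₂ x)
      (hinj₁ : Set.InjOn ρ₁ (ids C)) (hinj₂ : Set.InjOn ρ₂ (ids C)) :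
      Step (Φ.plug (.or k (.or i (rename ρ₁ C) A) (.or j (rename ρ₂ C) B)))
           (Φ.plug (.or m C (.or k A B)))
  | ruleIII_and (Φ : Ctx) (A B C D : Cirq) (k : ℕ) :
      Step (Φ.plug (.or k (.and A C) (.and B D))) (Φ.plug (.and (.or k A B) (.or k C D)))
  | ruleIII_orN (Φ : Ctx) (A B C D : Cirq) (k l : ℕ)
      (hns : 2 ≤ cnt l (Φ.plug (.or l (.or k A B) (.or k C D)))) :
      Step (Φ.plug (.or k (.or l A C) (.or l B D))) (Φ.plug (.or l (.or k A B) (.or k C D)))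
  | ruleIII_orS (Φ : Ctx) (A B C D : Cirq) (k i j m : ℕ)
      (hij : i ≠ j) (hik : i ≠ k) (hjk : j ≠ k) (him : i ≠ m) (hjm : j ≠ m) (hkm : k ≠ m)
      (hi : cnt i (Φ.plug (.or k (.or i A C) (.or j B D))) = 1)
      (hj : cnt j (Φ.plug (.or k (.or i A C) (.or j B D))) = 1)
      (hm : cnt m (Φ.plug (.or m (.or k A B) (.or k C D))) = 1) :
      Step (Φ.plug (.or k (.or i A C) (.or j B D))) (Φ.plug (.or m (.or k A B) (.or k C D)))

/-- Provability in IF_p: start from a classical tautology, apply rules. -/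
inductive Proves : Cirq → Prop where
  | ax (C : Cirq) (hc : classicalCirq C) (ht : ∀ I : ℕ → Bool, ctrue I C) : Proves C
  | step (P C : Cirq) (hp : Proves P) (hs : Step P C) : Proves C


lemma plug_congr (Φ : Ctx) (I f : ℕ → Bool) {X Y : Cirq}
    (h : metatrue I f X ↔ metatrue I f Y) :
    metatrue I f (Φ.plug X) ↔ metatrue I f (Φ.plug Y) := by
  induction Φ with
  | hole => exact h
  | andL Φ C ih => simp [Ctx.plug, metatrue, ih]
  | andR C Φ ih => simp [Ctx.plug, metatrue, ih]
  | orL k Φ C ih => simp [Ctx.plug, metatrue, ih]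
  | orR k C Φ ih => simp [Ctx.plug, metatrue, ih]

theorem stmt2 (Φ Ψ : Ctx) (A B C : Cirq) (k : ℕ) (I f : ℕ → Bool) :
    metatrue I f (Φ.plug (.or k (Ψ.plug A) C)) ↔
    metatrue I f (Φ.plug (.or k (Ψ.plug (.or k A B)) C)) := by
  apply plug_congr
  cases hk : f k with
  | true =>
    simp only [metatrue, hk, true_and, false_and, or_false, Bool.true_eq_false, false_and, or_false]
    exact plug_congr Ψ I f (by simp only [metatrue, hk, true_and, Bool.true_eq_false, false_and, or_false])
  | false =>
    simp [metatrue, hk]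
end

section
/- Rule I (left) preserves truth in both directions: for any context Φ{}, inner context Ψ{}, cirquents A, B, C, cluster ID k, and interpretation *, the cirquent Φ{Ψ{A} ∨_k C} is true under * if and only if Φ{Ψ{A ∨_k B} ∨_k C} is true under *. -/
lemma metatrue_mono (I f : ℕ → Bool) (X Y : Cirq) (h : metatrue I f X → metatrue I f Y) :
    ∀ Γ : Ctx, metatrue I f (Γ.plug X) → metatrue I f (Γ.plug Y) := by
  intro Γ
  induction Γ with
  | hole => exact h
  | andL Φ C ih => exact fun ⟨h1, h2⟩ => ⟨ih h1, h2⟩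
  | andR C Φ ih => exact fun ⟨h1, h2⟩ => ⟨h1, ih h2⟩
  | orL k Φ C ih =>
      rintro (⟨hk, h1⟩ | ⟨hk, h1⟩)
      · exact Or.inl ⟨hk, ih h1⟩
      · exact Or.inr ⟨hk, h1⟩
  | orR k C Φ ih =>
      rintro (⟨hk, h1⟩ | ⟨hk, h1⟩)
      · exact Or.inl ⟨hk, h1⟩
      · exact Or.inr ⟨hk, ih h1⟩

theorem stmt3 (Φ Ψ : Ctx) (A B C : Cirq) (k : ℕ) (I : ℕ → Bool) :
    cirqTrue I (Φ.plug (.or k (Ψ.plug A) C)) ↔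
    cirqTrue I (Φ.plug (.or k (Ψ.plug (.or k A B)) C)) := by
  constructor
  · rintro ⟨f, hf⟩
    refine ⟨f, metatrue_mono I f _ _ ?_ Φ hf⟩
    rintro (⟨hk, h1⟩ | ⟨hk, h1⟩)
    · exact Or.inl ⟨hk, metatrue_mono I f A (.or k A B) (fun ha => Or.inl ⟨hk, ha⟩) Ψ h1⟩
    · exact Or.inr ⟨hk, h1⟩
  · rintro ⟨f, hf⟩
    refine ⟨f, metatrue_mono I f _ _ ?_ Φ hf⟩
    rintro (⟨hk, h1⟩ | ⟨hk, h1⟩)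
    · refine Or.inl ⟨hk, metatrue_mono I f (.or k A B) A ?_ Ψ h1⟩
      rintro (⟨_, ha⟩ | ⟨hk', _⟩)
      · exact ha
      · rw [hk] at hk'; exact absurd hk' (by simp)
    · exact Or.inr ⟨hk, h1⟩
end

section
/- Rule II (left) with conjunction preserves metatruth pointwise: for any context Φ{}, cirquents A, B, C, cluster ID k, interpretation *, and metaselection f, the cirquent Φ{(A ∧ C) ∨_k (B ∧ C)} is metatrue w.r.t. (*, f) if and only if Φ{(A ∨_k B) ∧ C} is metatrue w.r.t. (*, f). -/
theorem stmt4 (Φ : Ctx) (A B C : Cirq) (k : ℕ) (I f : ℕ → Bool) :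
    metatrue I f (Φ.plug (.or k (.and A C) (.and B C))) ↔
    metatrue I f (Φ.plug (.and (.or k A B) C)) := by
  induction Φ with
  | hole =>
    simp only [Ctx.plug, metatrue]
    cases h : f k <;> simp [h] <;> tauto
  | andL Φ D ih => simp only [Ctx.plug, metatrue]; rw [ih]
  | andR D Φ ih => simp only [Ctx.plug, metatrue]; rw [ih]
  | orL m Φ D ih => simp only [Ctx.plug, metatrue]; rw [ih]
  | orR m D Φ ih => simp only [Ctx.plug, metatrue]; rw [ih]
end

section
/- Rule II (left) with a shared-cluster disjunction preserves metatruth pointwise: for any context Φ{}, cirquents A, B, C, cluster IDs k and l, interpretation *, and metaselection f, the cirquent Φ{(A ∨_l C) ∨_k (B ∨_l C)} is metatrue w.r.t. (*, f) if and only if Φ{(A ∨_k B) ∨_l C} is metatrue w.r.t. (*, f). -/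
theorem stmt5 (Φ : Ctx) (A B C : Cirq) (k l : ℕ) (I f : ℕ → Bool) :
    metatrue I f (Φ.plug (.or k (.or l A C) (.or l B C))) ↔
    metatrue I f (Φ.plug (.or l (.or k A B) C)) := by
  induction Φ with
  | hole =>
    simp only [Ctx.plug, metatrue]
    cases h1 : f k <;> cases h2 : f l <;> simp [h1, h2] <;> tauto
  | andL Φ D ih => simp only [Ctx.plug, metatrue]; rw [ih]
  | andR D Φ ih => simp only [Ctx.plug, metatrue]; rw [ih]
  | orL m Φ D ih => simp only [Ctx.plug, metatrue]; rw [ih]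
  | orR m D Φ ih => simp only [Ctx.plug, metatrue]; rw [ih]
end

section
/- Rule III with conjunction preserves metatruth pointwise: for any context Φ{}, cirquents A, B, C, D, cluster ID k, interpretation *, and metaselection f, the cirquent Φ{(A ∧ C) ∨_k (B ∧ D)} is metatrue w.r.t. (*, f) if and only if Φ{(A ∨_k B) ∧ (C ∨_k D)} is metatrue w.r.t. (*, f). -/
theorem stmt6 (Φ : Ctx) (A B C D : Cirq) (k : ℕ) (I f : ℕ → Bool) :
    metatrue I f (Φ.plug (.or k (.and A C) (.and B D))) ↔
    metatrue I f (Φ.plug (.and (.or k A B) (.or k C D))) := by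
  induction Φ with
  | hole =>
    cases hk : f k <;> simp [Ctx.plug, metatrue, hk]
  | andL Φ E ih => simp [Ctx.plug, metatrue, ih]
  | andR E Φ ih => simp [Ctx.plug, metatrue, ih]
  | orL m Φ E ih => simp [Ctx.plug, metatrue, ih]
  | orR m E Φ ih => simp [Ctx.plug, metatrue, ih]
end

section
/- Rule III with shared-cluster inner disjunctions preserves metatruth pointwise: for any context Φ{}, cirquents A, B, C, D, cluster IDs k and l, interpretation *, and metaselection f, the cirquent Φ{(A ∨_l C) ∨_k (B ∨_l D)} is metatrue w.r.t. (*, f) if and only if Φ{(A ∨_k B) ∨_l (C ∨_k D)} is metatrue w.r.t. (*, f). -/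
lemma base (A B C D : Cirq) (k l : ℕ) (I f : ℕ → Bool) :
    metatrue I f (.or k (.or l A C) (.or l B D)) ↔
    metatrue I f (.or l (.or k A B) (.or k C D)) := by
  simp only [metatrue]
  cases hk : f k <;> cases hl : f l <;> simp [hk, hl]

theorem stmt7 (Φ : Ctx) (A B C D : Cirq) (k l : ℕ) (I f : ℕ → Bool) :
    metatrue I f (Φ.plug (.or k (.or l A C) (.or l B D))) ↔
    metatrue I f (Φ.plug (.or l (.or k A B) (.or k C D))) := by

  induction Φ with
  | hole => exact base A B C D k l I f
  | andL Φ E ih => simp [Ctx.plug, metatrue, ih]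
  | andR E Φ ih => simp [Ctx.plug, metatrue, ih]
  | orL m Φ E ih => simp [Ctx.plug, metatrue, ih]
  | orR m E Φ ih => simp [Ctx.plug, metatrue, ih]
end

section
/- If a cirquent C is provable in system IF_p, then C is valid (true under every interpretation). -/
section Soundness

open Classical

lemma metatrue_lit {I f : ℕ → Bool} {n : ℕ} {s : Bool} :
    metatrue I f (.lit n s) ↔ I n = s := Iff.rfl

lemma metatrue_and {I f : ℕ → Bool} {A B : Cirq} :
    metatrue I f (.and A B) ↔ metatrue I f A ∧ metatrue I f B := Iff.rfl

lemma metatrue_or {I f : ℕ → Bool} {k : ℕ} {A B : Cirq} :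
    metatrue I f (.or k A B) ↔
      (f k = true ∧ metatrue I f A) ∨ (f k = false ∧ metatrue I f B) := Iff.rfl

lemma ids_pos (x : ℕ) (Z : Cirq) : x ∈ ids Z ↔ 0 < cnt x Z := by
  induction Z with
  | lit n s => simp [ids, cnt]
  | and A B ihA ihB => simp [ids, cnt, ihA, ihB]
  | or k A B ihA ihB =>
      simp only [ids, Set.mem_insert_iff, Set.mem_union, ihA, ihB, cnt]
      by_cases h : k = x <;> simp [h, Ne.symm]

lemma metatrue_congr {I : ℕ → Bool} (f g : ℕ → Bool) (Z : Cirq)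
    (h : ∀ x ∈ ids Z, f x = g x) : metatrue I f Z ↔ metatrue I g Z := by
  induction Z with
  | lit n s => exact Iff.rfl
  | and A B ihA ihB =>
      rw [metatrue_and, metatrue_and,
        ihA (fun x hx => h x (by simp [ids]; exact Or.inl hx)),
        ihB (fun x hx => h x (by simp [ids]; exact Or.inr hx))]
  | or k A B ihA ihB =>
      rw [metatrue_or, metatrue_or, h k (by simp [ids]),
        ihA (fun x hx => h x (by simp [ids]; exact Or.inr (Or.inl hx))),
        ihB (fun x hx => h x (by simp [ids]; exact Or.inr (Or.inr hx)))]

lemma metatrue_rename (I f : ℕ → Bool) (ρ : ℕ → ℕ) (C : Cirq) :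
    metatrue I f (rename ρ C) ↔ metatrue I (fun x => f (ρ x)) C := by
  induction C with
  | lit n s => exact Iff.rfl
  | and A B ihA ihB => rw [rename, metatrue_and, metatrue_and, ihA, ihB]
  | or k A B ihA ihB => rw [rename, metatrue_or, metatrue_or, ihA, ihB]

/-- number of ∨-occurrences of a cluster in a context skeleton -/
def cntCtx (x : ℕ) : Ctx → ℕ
  | .hole => 0
  | .andL Φ C => cntCtx x Φ + cnt x C
  | .andR C Φ => cnt x C + cntCtx x Φ
  | .orL k Φ C => (if k = x then 1 else 0) + cntCtx x Φ + cnt x C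
  | .orR k C Φ => (if k = x then 1 else 0) + cnt x C + cntCtx x Φ

lemma cnt_plug (x : ℕ) (Φ : Ctx) (X : Cirq) :
    cnt x (Φ.plug X) = cntCtx x Φ + cnt x X := by
  induction Φ with
  | hole => simp [Ctx.plug, cntCtx]
  | andL Φ C ih => simp [Ctx.plug, cnt, cntCtx, ih]; omega
  | andR C Φ ih => simp [Ctx.plug, cnt, cntCtx, ih]; omega
  | orL k Φ C ih => simp [Ctx.plug, cnt, cntCtx, ih]; omega
  | orR k C Φ ih => simp [Ctx.plug, cnt, cntCtx, ih]; omega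

lemma mono2 {I f g : ℕ → Bool} (Φ : Ctx) {X Y : Cirq}
    (hfg : ∀ x, 0 < cntCtx x Φ → f x = g x)
    (hXY : metatrue I f X → metatrue I g Y) :
    metatrue I f (Φ.plug X) → metatrue I g (Φ.plug Y) := by
  induction Φ generalizing X Y with
  | hole => exact hXY
  | andL Φ C ih =>
      intro h
      obtain ⟨h1, h2⟩ := h
      refine ⟨ih (fun x hx => hfg x (by simp [cntCtx]; omega)) hXY h1, ?_⟩
      exact (metatrue_congr f g C (fun x hx => hfg x
        (by have := (ids_pos x C).mp hx; simp [cntCtx]; omega))).mp h2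
  | andR C Φ ih =>
      intro h
      obtain ⟨h1, h2⟩ := h
      refine ⟨?_, ih (fun x hx => hfg x (by simp [cntCtx]; omega)) hXY h2⟩
      exact (metatrue_congr f g C (fun x hx => hfg x
        (by have := (ids_pos x C).mp hx; simp [cntCtx]; omega))).mp h1
  | orL k Φ C ih =>
      intro h
      have hk : f k = g k := hfg k (by simp [cntCtx])
      rcases h with ⟨h1, h2⟩ | ⟨h1, h2⟩
      · exact Or.inl ⟨hk ▸ h1, ih (fun x hx => hfg x (by simp [cntCtx]; omega)) hXY h2⟩
      · exact Or.inr ⟨hk ▸ h1, (metatrue_congr f g C (fun x hx => hfg x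
          (by have := (ids_pos x C).mp hx; simp [cntCtx]; omega))).mp h2⟩
  | orR k C Φ ih =>
      intro h
      have hk : f k = g k := hfg k (by simp [cntCtx])
      rcases h with ⟨h1, h2⟩ | ⟨h1, h2⟩
      · exact Or.inl ⟨hk ▸ h1, (metatrue_congr f g C (fun x hx => hfg x
          (by have := (ids_pos x C).mp hx; simp [cntCtx]; omega))).mp h2⟩
      · exact Or.inr ⟨hk ▸ h1, ih (fun x hx => hfg x (by simp [cntCtx]; omega)) hXY h2⟩

lemma classical_true {I : ℕ → Bool} (C : Cirq) (hc : ∀ k, cnt k C ≤ 1)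
    (h : ctrue I C) : ∃ f, metatrue I f C := by
  induction C with
  | lit n s => exact ⟨fun _ => true, h⟩
  | and A B ihA ihB =>
      obtain ⟨hA, hB⟩ := h
      obtain ⟨f₁, h₁⟩ := ihA (fun k => by have := hc k; simp [cnt] at this; omega) hA
      obtain ⟨f₂, h₂⟩ := ihB (fun k => by have := hc k; simp [cnt] at this; omega) hB
      refine ⟨fun x => if 0 < cnt x A then f₁ x else f₂ x, ?_, ?_⟩
      · exact (metatrue_congr f₁ _ A (fun x hx => by
          have hp := (ids_pos x A).mp hx; rw [if_pos hp])).mp h₁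
      · refine (metatrue_congr f₂ _ B (fun x hx => ?_)).mp h₂
        have hp := (ids_pos x B).mp hx
        have hc' := hc x
        have h0 : ¬ 0 < cnt x A := by simp [cnt] at hc'; omega
        rw [if_neg h0]
  | or k A B ihA ihB =>
      have hk := hc k
      have hA0 : cnt k A = 0 := by simp [cnt] at hk; omega
      have hB0 : cnt k B = 0 := by simp [cnt] at hk; omega
      rcases h with h | h
      · obtain ⟨f₁, h₁⟩ := ihA (fun l => by have := hc l; simp [cnt] at this; omega) h
        refine ⟨fun x => if x = k then true else f₁ x, Or.inl ⟨by simp, ?_⟩⟩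
        refine (metatrue_congr f₁ _ A (fun x hx => ?_)).mp h₁
        have hp := (ids_pos x A).mp hx
        have : x ≠ k := by rintro rfl; omega
        rw [if_neg this]
      · obtain ⟨f₂, h₂⟩ := ihB (fun l => by have := hc l; simp [cnt] at this; omega) h
        refine ⟨fun x => if x = k then false else f₂ x, Or.inr ⟨by simp, ?_⟩⟩
        refine (metatrue_congr f₂ _ B (fun x hx => ?_)).mp h₂
        have hp := (ids_pos x B).mp hx
        have : x ≠ k := by rintro rfl; omega
        rw [if_neg this]

end Soundness

section StepSound
open Classical

lemma step_sound {P Q : Cirq} (hs : Step P Q) (I : ℕ → Bool) :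
    cirqTrue I P → cirqTrue I Q := by
  rintro ⟨f, hf⟩
  cases hs with
  | ruleIL Φ Ψ A B C k =>
      refine ⟨f, mono2 Φ (fun _ _ => rfl) (fun h => ?_) hf⟩
      rcases h with ⟨h1, h2⟩ | ⟨h1, h2⟩
      · exact Or.inl ⟨h1, mono2 Ψ (fun _ _ => rfl) (fun hA => Or.inl ⟨h1, hA⟩) h2⟩
      · exact Or.inr ⟨h1, h2⟩
  | ruleIR Φ Ψ A B C k =>
      refine ⟨f, mono2 Φ (fun _ _ => rfl) (fun h => ?_) hf⟩
      rcases h with ⟨h1, h2⟩ | ⟨h1, h2⟩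
      · exact Or.inl ⟨h1, h2⟩
      · exact Or.inr ⟨h1, mono2 Ψ (fun _ _ => rfl) (fun hA => Or.inr ⟨h1, hA⟩) h2⟩
  | ruleIIL_and Φ A B C k =>
      refine ⟨f, mono2 Φ (fun _ _ => rfl) (fun h => ?_) hf⟩
      rcases h with ⟨h1, h2, h3⟩ | ⟨h1, h2, h3⟩
      · exact ⟨Or.inl ⟨h1, h2⟩, h3⟩
      · exact ⟨Or.inr ⟨h1, h2⟩, h3⟩
  | ruleIIR_and Φ A B C k =>
      refine ⟨f, mono2 Φ (fun _ _ => rfl) (fun h => ?_) hf⟩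
      rcases h with ⟨h1, h2, h3⟩ | ⟨h1, h2, h3⟩
      · exact ⟨h2, Or.inl ⟨h1, h3⟩⟩
      · exact ⟨h2, Or.inr ⟨h1, h3⟩⟩
  | ruleIIL_orN Φ A B C k l hns =>
      refine ⟨f, mono2 Φ (fun _ _ => rfl) (fun h => ?_) hf⟩
      rcases h with ⟨h1, ⟨h2, h3⟩ | ⟨h2, h3⟩⟩ | ⟨h1, ⟨h2, h3⟩ | ⟨h2, h3⟩⟩
      · exact Or.inl ⟨h2, Or.inl ⟨h1, h3⟩⟩
      · exact Or.inr ⟨h2, h3⟩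
      · exact Or.inl ⟨h2, Or.inr ⟨h1, h3⟩⟩
      · exact Or.inr ⟨h2, h3⟩
  | ruleIIR_orN Φ A B C k l hns =>
      refine ⟨f, mono2 Φ (fun _ _ => rfl) (fun h => ?_) hf⟩
      rcases h with ⟨h1, ⟨h2, h3⟩ | ⟨h2, h3⟩⟩ | ⟨h1, ⟨h2, h3⟩ | ⟨h2, h3⟩⟩
      · exact Or.inl ⟨h2, h3⟩
      · exact Or.inr ⟨h2, Or.inl ⟨h1, h3⟩⟩
      · exact Or.inl ⟨h2, h3⟩
      · exact Or.inr ⟨h2, Or.inr ⟨h1, h3⟩⟩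
  | ruleIII_and Φ A B C D k =>
      refine ⟨f, mono2 Φ (fun _ _ => rfl) (fun h => ?_) hf⟩
      rcases h with ⟨h1, h2, h3⟩ | ⟨h1, h2, h3⟩
      · exact ⟨Or.inl ⟨h1, h2⟩, Or.inl ⟨h1, h3⟩⟩
      · exact ⟨Or.inr ⟨h1, h2⟩, Or.inr ⟨h1, h3⟩⟩
  | ruleIII_orN Φ A B C D k l hns =>
      refine ⟨f, mono2 Φ (fun _ _ => rfl) (fun h => ?_) hf⟩
      rcases h with ⟨h1, ⟨h2, h3⟩ | ⟨h2, h3⟩⟩ | ⟨h1, ⟨h2, h3⟩ | ⟨h2, h3⟩⟩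
      · exact Or.inl ⟨h2, Or.inl ⟨h1, h3⟩⟩
      · exact Or.inr ⟨h2, Or.inl ⟨h1, h3⟩⟩
      · exact Or.inl ⟨h2, Or.inr ⟨h1, h3⟩⟩
      · exact Or.inr ⟨h2, Or.inr ⟨h1, h3⟩⟩
  | ruleIII_orS Φ A B C D k i j m hij hik hjk him hjm hkm hi hj hm =>
      rw [cnt_plug] at hm
      simp [cnt, hkm] at hm
      -- hm gives: cntCtx m Φ = 0, cnt m A = cnt m B = cnt m C = cnt m D = 0
      set g := fun x => if x = m then (if f k then f i else f j) else f x with hg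
      have hgm : ∀ x, x ≠ m → g x = f x := fun x hx => by simp [hg, hx]
      have agree : ∀ Z : Cirq, cnt m Z = 0 → (metatrue I f Z ↔ metatrue I g Z) := by
        intro Z hZ
        refine metatrue_congr f g Z (fun x hx => ?_)
        have := (ids_pos x Z).mp hx
        exact (hgm x (by rintro rfl; omega)).symm
      have hgk : g k = f k := hgm k hkm
      refine ⟨g, mono2 Φ (fun x hx => (hgm x (by rintro rfl; omega)).symm) (fun h => ?_) hf⟩
      rcases h with ⟨h1, ⟨h2, h3⟩ | ⟨h2, h3⟩⟩ | ⟨h1, ⟨h2, h3⟩ | ⟨h2, h3⟩⟩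
      · exact Or.inl ⟨by simp [hg, h1, h2], Or.inl ⟨by rw [hgk, h1],
          (agree A (by omega)).mp h3⟩⟩
      · exact Or.inr ⟨by simp [hg, h1, h2], Or.inl ⟨by rw [hgk, h1],
          (agree C (by omega)).mp h3⟩⟩
      · exact Or.inl ⟨by simp [hg, h1, h2], Or.inr ⟨by rw [hgk, h1],
          (agree B (by omega)).mp h3⟩⟩
      · exact Or.inr ⟨by simp [hg, h1, h2], Or.inr ⟨by rw [hgk, h1],
          (agree D (by omega)).mp h3⟩⟩
  | ruleIIL_orS Φ A B C ρ₁ ρ₂ k i j m hij hik hjk him hjm hkm hi hj hm hfix hfresh hinj₁ hinj₂ =>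
      clear hi hj hfresh hinj₁ hinj₂
      have hm' := hm
      rw [cnt_plug] at hm'
      simp [cnt, hkm] at hm'
      -- hm' : cntCtx m Φ, cnt m A, cnt m B, cnt m C are all 0
      have key : ∀ x, x ∈ ids C → cnt x (Φ.plug (.or m (.or k A B) C)) = 1 →
          cntCtx x Φ = 0 ∧ cnt x A = 0 ∧ cnt x B = 0 := by
        intro x hx h1
        have hxC := (ids_pos x C).mp hx
        have hxm : m ≠ x := by rintro rfl; omega
        have hxk : k ≠ x := by
          rintro rfl
          rw [cnt_plug] at h1; simp [cnt, hxm] at h1; omega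
        rw [cnt_plug] at h1; simp [cnt, hxm, hxk] at h1
        omega
      have hknc : ¬(k ∈ ids C ∧ cnt k (Φ.plug (.or m (.or k A B) C)) = 1) := by
        rintro ⟨h1, h2⟩
        have := (ids_pos k C).mp h1
        rw [cnt_plug] at h2; simp [cnt, Ne.symm hkm] at h2
        omega
      set g := fun x => if x = m then (if f k then f i else f j)
        else if x ∈ ids C ∧ cnt x (Φ.plug (.or m (.or k A B) C)) = 1
          then f ((if f k then ρ₁ else ρ₂) x) else f x with hg
      refine ⟨g, mono2 Φ (fun x hx => ?_) (fun h => ?_) hf⟩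
      · have hxm : x ≠ m := by rintro rfl; omega
        have hcond : ¬(x ∈ ids C ∧ cnt x (Φ.plug (.or m (.or k A B) C)) = 1) := by
          rintro ⟨h1, h2⟩
          have := (key x h1 h2).1; omega
        simp [hg, hxm, hcond]
      · rcases h with ⟨h1, hL⟩ | ⟨h1, hR⟩
        · rcases hL with ⟨h2, hA⟩ | ⟨h2, hC⟩
          · refine Or.inl ⟨by simp [hg, h1, h2], Or.inl ⟨by simp [hg, hkm, hknc, h1], ?_⟩⟩
            refine (metatrue_congr f g A (fun x hx => ?_)).mp hA
            have hxA := (ids_pos x A).mp hx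
            have hxm : x ≠ m := by rintro rfl; omega
            have hcond : ¬(x ∈ ids C ∧ cnt x (Φ.plug (.or m (.or k A B) C)) = 1) := by
              rintro ⟨c1, c2⟩; have := (key x c1 c2).2.1; omega
            simp [hg, hxm, hcond]
          · refine Or.inr ⟨by simp [hg, h1, h2], ?_⟩
            have hC' := (metatrue_rename I f ρ₁ C).mp hC
            refine (metatrue_congr _ g C (fun x hx => ?_)).mp hC'
            have hxC := (ids_pos x C).mp hx
            have hxm : x ≠ m := by rintro rfl; omega
            by_cases hc1 : cnt x (Φ.plug (.or m (.or k A B) C)) = 1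
            · simp [hg, hxm, hx, hc1, h1]
            · obtain ⟨e1, _⟩ := hfix x hx hc1
              simp [hg, hxm, hc1, e1]
        · rcases hR with ⟨h2, hB⟩ | ⟨h2, hC⟩
          · refine Or.inl ⟨by simp [hg, h1, h2], Or.inr ⟨by simp [hg, hkm, hknc, h1], ?_⟩⟩
            refine (metatrue_congr f g B (fun x hx => ?_)).mp hB
            have hxB := (ids_pos x B).mp hx
            have hxm : x ≠ m := by rintro rfl; omega
            have hcond : ¬(x ∈ ids C ∧ cnt x (Φ.plug (.or m (.or k A B) C)) = 1) := by
              rintro ⟨c1, c2⟩; have := (key x c1 c2).2.2; omega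
            simp [hg, hxm, hcond]
          · refine Or.inr ⟨by simp [hg, h1, h2], ?_⟩
            have hC' := (metatrue_rename I f ρ₂ C).mp hC
            refine (metatrue_congr _ g C (fun x hx => ?_)).mp hC'
            have hxC := (ids_pos x C).mp hx
            have hxm : x ≠ m := by rintro rfl; omega
            by_cases hc1 : cnt x (Φ.plug (.or m (.or k A B) C)) = 1
            · simp [hg, hxm, hx, hc1, h1]
            · obtain ⟨_, e2⟩ := hfix x hx hc1
              simp [hg, hxm, hc1, e2]
  | ruleIIR_orS Φ A B C ρ₁ ρ₂ k i j m hij hik hjk him hjm hkm hi hj hm hfix hfresh hinj₁ hinj₂ =>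
      clear hi hj hfresh hinj₁ hinj₂
      have hm' := hm
      rw [cnt_plug] at hm'
      simp [cnt, hkm] at hm'
      have key : ∀ x, x ∈ ids C → cnt x (Φ.plug (.or m C (.or k A B))) = 1 →
          cntCtx x Φ = 0 ∧ cnt x A = 0 ∧ cnt x B = 0 := by
        intro x hx h1
        have hxC := (ids_pos x C).mp hx
        have hxm : m ≠ x := by rintro rfl; omega
        have hxk : k ≠ x := by
          rintro rfl
          rw [cnt_plug] at h1; simp [cnt, hxm] at h1; omega
        rw [cnt_plug] at h1; simp [cnt, hxm, hxk] at h1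
        omega
      have hknc : ¬(k ∈ ids C ∧ cnt k (Φ.plug (.or m C (.or k A B))) = 1) := by
        rintro ⟨h1, h2⟩
        have := (ids_pos k C).mp h1
        rw [cnt_plug] at h2; simp [cnt, Ne.symm hkm] at h2
        omega
      set g := fun x => if x = m then (if f k then f i else f j)
        else if x ∈ ids C ∧ cnt x (Φ.plug (.or m C (.or k A B))) = 1
          then f ((if f k then ρ₁ else ρ₂) x) else f x with hg
      refine ⟨g, mono2 Φ (fun x hx => ?_) (fun h => ?_) hf⟩
      · have hxm : x ≠ m := by rintro rfl; omega
        have hcond : ¬(x ∈ ids C ∧ cnt x (Φ.plug (.or m C (.or k A B))) = 1) := by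
          rintro ⟨h1, h2⟩
          have := (key x h1 h2).1; omega
        simp [hg, hxm, hcond]
      · rcases h with ⟨h1, hL⟩ | ⟨h1, hR⟩
        · rcases hL with ⟨h2, hC⟩ | ⟨h2, hA⟩
          · refine Or.inl ⟨by simp [hg, h1, h2], ?_⟩
            have hC' := (metatrue_rename I f ρ₁ C).mp hC
            refine (metatrue_congr _ g C (fun x hx => ?_)).mp hC'
            have hxC := (ids_pos x C).mp hx
            have hxm : x ≠ m := by rintro rfl; omega
            by_cases hc1 : cnt x (Φ.plug (.or m C (.or k A B))) = 1
            · simp [hg, hxm, hx, hc1, h1]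
            · obtain ⟨e1, _⟩ := hfix x hx hc1
              simp [hg, hxm, hc1, e1]
          · refine Or.inr ⟨by simp [hg, h1, h2], Or.inl ⟨by simp [hg, hkm, hknc, h1], ?_⟩⟩
            refine (metatrue_congr f g A (fun x hx => ?_)).mp hA
            have hxA := (ids_pos x A).mp hx
            have hxm : x ≠ m := by rintro rfl; omega
            have hcond : ¬(x ∈ ids C ∧ cnt x (Φ.plug (.or m C (.or k A B))) = 1) := by
              rintro ⟨c1, c2⟩; have := (key x c1 c2).2.1; omega
            simp [hg, hxm, hcond]
        · rcases hR with ⟨h2, hC⟩ | ⟨h2, hB⟩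
          · refine Or.inl ⟨by simp [hg, h1, h2], ?_⟩
            have hC' := (metatrue_rename I f ρ₂ C).mp hC
            refine (metatrue_congr _ g C (fun x hx => ?_)).mp hC'
            have hxC := (ids_pos x C).mp hx
            have hxm : x ≠ m := by rintro rfl; omega
            by_cases hc1 : cnt x (Φ.plug (.or m C (.or k A B))) = 1
            · simp [hg, hxm, hx, hc1, h1]
            · obtain ⟨_, e2⟩ := hfix x hx hc1
              simp [hg, hxm, hc1, e2]
          · refine Or.inr ⟨by simp [hg, h1, h2], Or.inr ⟨by simp [hg, hkm, hknc, h1], ?_⟩⟩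
            refine (metatrue_congr f g B (fun x hx => ?_)).mp hB
            have hxB := (ids_pos x B).mp hx
            have hxm : x ≠ m := by rintro rfl; omega
            have hcond : ¬(x ∈ ids C ∧ cnt x (Φ.plug (.or m C (.or k A B))) = 1) := by
              rintro ⟨c1, c2⟩; have := (key x c1 c2).2.2; omega
            simp [hg, hxm, hcond]

end StepSound

theorem stmt10 (C : Cirq) (h : Proves C) : valid C := by
  induction h with
  | ax C hc ht => intro I; exact classical_true C hc (ht I)
  | step P C hp hs ih => intro I; exact step_sound hs I (ih I)
end
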